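/- arXiv:2605.30445 — 2 statements merged into one kernel-verified Lean document; each statement's English description precedes it below -/
import Mathlib

section
/- Let C be a nonconstant rational map with C(𝕋) ⊆ 𝕋 (i.e., C ∈ QFBP). If C^{-1}(𝕋) = 𝕋, then C is a finite Blaschke product or 1/C is a finite Blaschke product. -/
/-! Rational maps on the Riemann sphere `ℂ̂ = OnePoint ℂ`, quotients of finite
Blaschke products, and finite Blaschke products. -/

open Complex Metric Set OnePoint

/-- `r : ℂ̂ → ℂ̂` is a rational map: it is continuous and agrees with `p/q`
(for some polynomials `p, q` with `q ≠ 0`) away from the zeros of `q`. -/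
def IsRationalMap (r : OnePoint ℂ → OnePoint ℂ) : Prop :=
  Continuous r ∧ ∃ p q : Polynomial ℂ, q ≠ 0 ∧
    ∀ z : ℂ, q.eval z ≠ 0 → r (z : OnePoint ℂ) = ((p.eval z / q.eval z : ℂ) : OnePoint ℂ)

/-- The unit circle `𝕋`, viewed as a subset of the Riemann sphere. -/
def circleHat : Set (OnePoint ℂ) :=
  (fun z : ℂ => (z : OnePoint ℂ)) '' (sphere (0:ℂ) 1)

/-- `B` is a finite Blaschke product of degree `d ≥ 1`: on the closed unit disk it is
given by `B z = λ · ∏ i (z - a i)/(1 - conj (a i) · z)` with `|λ| = 1` and all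
`a i` in the open unit disk. -/
def IsBlaschke (d : ℕ) (B : ℂ → ℂ) : Prop :=
  1 ≤ d ∧ ∃ (l : ℂ) (a : Fin d → ℂ), ‖l‖ = 1 ∧ (∀ i, ‖a i‖ < 1) ∧
    ∀ z : ℂ, ‖z‖ ≤ 1 →
      B z = l * ∏ i, (z - a i) / (1 - (starRingEnd ℂ) (a i) * z)

/-- The rational map `C : ℂ̂ → ℂ̂` "is" the finite Blaschke product `B` of degree `d`:
it agrees with `B` on the closed unit disk (which determines a rational map). -/
def IsBlaschkeHat (d : ℕ) (C : OnePoint ℂ → OnePoint ℂ) : Prop :=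
  ∃ B : ℂ → ℂ, IsBlaschke d B ∧
    ∀ z : ℂ, ‖z‖ ≤ 1 → C (z : OnePoint ℂ) = ((B z : ℂ) : OnePoint ℂ)

/-- The rational map `C : ℂ̂ → ℂ̂` is the reciprocal `1/B` of the finite Blaschke
product `B` of degree `d`: on the closed unit disk, `C z = ∞` at zeros of `B` and
`C z = (B z)⁻¹` elsewhere. -/
def IsInvBlaschkeHat (d : ℕ) (C : OnePoint ℂ → OnePoint ℂ) : Prop :=
  ∃ B : ℂ → ℂ, IsBlaschke d B ∧
    ∀ z : ℂ, ‖z‖ ≤ 1 →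
      (B z = 0 → C (z : OnePoint ℂ) = ∞) ∧
      (B z ≠ 0 → C (z : OnePoint ℂ) = (((B z)⁻¹ : ℂ) : OnePoint ℂ))

/-!
Write `C = p / q` in lowest terms. Since `C⁻¹(𝕋) = 𝕋`, we have `|p| = |q|` exactly on the circle,
and the connected disk `𝔻` is mapped into one component of `ℂ̂ ∖ 𝕋`, so that either `q` or `p` has
no zero in the closed disk. In the first case, `|p| = |q|` on `𝕋` gives the polynomial identity
`p p* = q q*` for the reflections `p*(z) = zⁿ conj (p (1 / conj z))`, `n = max (deg p) (deg q)`;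
coprimality and a degree count force `p* = c q` with `|c| = 1`. Hence `deg p = n`, the zeros `aᵢ`
of `p` lie in `𝔻` (their reflections are zeros of `q`), and `p / q = c p / p*` is the Blaschke
product with zeros `aᵢ`. The second case is the first one for `1 / C = q / p`.
-/

open Polynomial Filter Topology Bornology ComplexConjugate

lemma Multiset.exists_univ_val_map_eq {α : Type*} (s : Multiset α) {n : ℕ}
    (hn : Multiset.card s = n) : ∃ a : Fin n → α, Finset.univ.val.map a = s := by
  subst hn
  refine ⟨fun i => s.toList.get (i.cast (by simp)), ?_⟩
  rw [Fin.univ_val_map]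
  conv_rhs => rw [← Multiset.coe_toList s]
  congr 1
  exact List.ext_get (by simp) (by simp)

/-- For `p.natDegree ≤ n` this is the reflection `z ↦ z ^ n * conj (p (1 / conj z))` of `p` in the
unit circle; defining it through the roots of `p` makes its factorisation immediate. -/
noncomputable def conjReflect (n : ℕ) (p : ℂ[X]) : ℂ[X] :=
  C (conj p.leadingCoeff) * X ^ (n - p.natDegree) *
    (p.roots.map fun a => 1 - C (conj a) * X).prod

lemma eval_conjReflect (n : ℕ) (p : ℂ[X]) (z : ℂ) :
    (conjReflect n p).eval z =
      conj p.leadingCoeff * z ^ (n - p.natDegree) * (p.roots.map fun a => 1 - conj a * z).prod := by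
  simp [conjReflect, eval_multiset_prod, Multiset.map_map]

lemma conjReflect_ne_zero {p : ℂ[X]} (hp : p ≠ 0) (n : ℕ) : conjReflect n p ≠ 0 := by
  refine mul_ne_zero (mul_ne_zero (by simpa using hp) (pow_ne_zero _ X_ne_zero))
    (Multiset.prod_ne_zero fun h => ?_)
  obtain ⟨a, -, ha⟩ := Multiset.mem_map.mp h
  simpa using congrArg (eval 0) ha

lemma natDegree_conjReflect_le {n : ℕ} {p : ℂ[X]} (hn : p.natDegree ≤ n) :
    (conjReflect n p).natDegree ≤ n := by
  have hfactor (a : ℂ) : (1 - C (conj a) * X).natDegree ≤ 1 :=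
    (natDegree_sub_le _ _).trans (by simpa using natDegree_C_mul_le (conj a) X)
  have hprod : (p.roots.map fun a => 1 - C (conj a) * X).prod.natDegree ≤ p.natDegree := by
    refine (natDegree_multiset_prod_le _).trans ?_
    rw [Multiset.map_map, ← IsAlgClosed.card_roots_eq_natDegree]
    simpa using Multiset.sum_map_le_sum_map _ (fun _ => 1) fun a _ => hfactor a
  have hmonomial := natDegree_C_mul_X_pow_le (conj p.leadingCoeff) (n - p.natDegree)
  exact natDegree_mul_le.trans (by omega)

lemma eval_conjReflect_of_norm_eq_one {n : ℕ} {p : ℂ[X]} (hn : p.natDegree ≤ n) {z : ℂ}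
    (hz : ‖z‖ = 1) : (conjReflect n p).eval z = z ^ n * conj (p.eval z) := by
  have hfactor (a : ℂ) : 1 - conj a * z = z * conj (z - a) := by
    rw [map_sub, mul_sub, Complex.mul_conj', hz]; push_cast; ring
  rw [eval_conjReflect, (IsAlgClosed.splits p).eval_eq_prod_roots, map_mul, map_multiset_prod,
    Multiset.map_congr rfl fun a _ => hfactor a, Multiset.prod_map_mul, Multiset.map_const',
    Multiset.prod_replicate, IsAlgClosed.card_roots_eq_natDegree, Multiset.map_map]
  conv_rhs => rw [← Nat.sub_add_cancel hn, pow_add]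
  simp only [Function.comp_def]
  ring

lemma mul_conjReflect_eq_of_norm_eval_eq {n : ℕ} {p q : ℂ[X]} (hpn : p.natDegree ≤ n)
    (hqn : q.natDegree ≤ n) (h : ∀ z : ℂ, ‖z‖ = 1 → ‖p.eval z‖ = ‖q.eval z‖) :
    p * conjReflect n p = q * conjReflect n q := by
  have hcircle : (sphere (0 : ℂ) 1).Infinite :=
    (isPreconnected_sphere (by simp) 0 1).infinite_of_nontrivial
      ⟨1, by simp, -1, by simp, by norm_num⟩
  refine eq_of_infinite_eval_eq _ _ (hcircle.mono fun z hz => ?_)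
  have hz : ‖z‖ = 1 := mem_sphere_zero_iff_norm.mp hz
  simp only [mem_ofPred_eq, eval_mul, eval_conjReflect_of_norm_eq_one hpn hz,
    eval_conjReflect_of_norm_eq_one hqn hz]
  rw [mul_left_comm, Complex.mul_conj', h z hz, mul_left_comm, Complex.mul_conj']

lemma exists_conjReflect_eq_C_mul {n : ℕ} {p q : ℂ[X]} (hp : p ≠ 0) (hq : q ≠ 0)
    (hcop : IsCoprime p q) (hn : n = max p.natDegree q.natDegree)
    (hid : p * conjReflect n p = q * conjReflect n q) : ∃ c : ℂ, conjReflect n p = C c * q := by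
  obtain ⟨u, hu⟩ : q ∣ conjReflect n p := hcop.symm.dvd_of_dvd_mul_left ⟨_, hid⟩
  obtain ⟨v, hv⟩ : p ∣ conjReflect n q := hcop.dvd_of_dvd_mul_left ⟨_, hid.symm⟩
  have hvu : v = u := by
    refine mul_left_cancel₀ (mul_ne_zero hp hq) ?_
    rw [hu, hv] at hid
    linear_combination -hid
  have hu0 : u ≠ 0 := by
    rintro rfl
    exact conjReflect_ne_zero hp n (by simpa using hu)
  have hpdeg := natDegree_conjReflect_le (p := p) (hn ▸ le_max_left _ _)
  have hqdeg := natDegree_conjReflect_le (p := q) (hn ▸ le_max_right _ _)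
  rw [hu, natDegree_mul hq hu0] at hpdeg
  rw [hv, hvu, natDegree_mul hp hu0] at hqdeg
  exact ⟨u.coeff 0, by rw [hu, mul_comm, ← eq_C_of_natDegree_eq_zero (by omega)]⟩

lemma natDegree_eq_of_eval_zero_conjReflect_ne_zero {n : ℕ} {p : ℂ[X]} (hn : p.natDegree ≤ n)
    (h0 : (conjReflect n p).eval 0 ≠ 0) : p.natDegree = n := by
  by_contra hne
  simp [eval_conjReflect, zero_pow (by omega : n - p.natDegree ≠ 0)] at h0

lemma norm_lt_one_of_mem_roots {n : ℕ} {p : ℂ[X]}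
    (h : ∀ z : ℂ, ‖z‖ ≤ 1 → (conjReflect n p).eval z ≠ 0) {a : ℂ} (ha : a ∈ p.roots) :
    ‖a‖ < 1 := by
  by_contra! ha1
  have ha0 : a ≠ 0 := by
    rintro rfl
    norm_num at ha1
  refine h (conj a)⁻¹ (by simpa using inv_le_one_of_one_le₀ ha1) ?_
  rw [eval_conjReflect]
  exact mul_eq_zero_of_right _ (Multiset.prod_eq_zero (Multiset.mem_map.mpr ⟨a, ha, by simp [ha0]⟩))

lemma eval_div_eval_conjReflect {n : ℕ} {p : ℂ[X]} (hn : p.natDegree = n) {a : Fin n → ℂ}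
    (ha : Finset.univ.val.map a = p.roots) (z : ℂ) :
    p.eval z / (conjReflect n p).eval z =
      p.leadingCoeff / conj p.leadingCoeff * ∏ i, (z - a i) / (1 - conj (a i) * z) := by
  rw [eval_conjReflect, (IsAlgClosed.splits p).eval_eq_prod_roots, hn, Nat.sub_self, pow_zero,
    mul_one, ← ha, Multiset.map_map, Multiset.map_map, Finset.prod_map_val, Finset.prod_map_val,
    Finset.prod_div_distrib, mul_div_mul_comm]
  rfl

lemma isBlaschke_eval_div_eval {n : ℕ} {p q : ℂ[X]} (hcop : IsCoprime p q)
    (hn : n = max p.natDegree q.natDegree) (hn1 : 1 ≤ n)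
    (hcircle : ∀ z : ℂ, ‖z‖ = 1 → ‖p.eval z‖ = ‖q.eval z‖)
    (hq : ∀ z : ℂ, ‖z‖ ≤ 1 → q.eval z ≠ 0) :
    IsBlaschke n fun z => p.eval z / q.eval z := by
  have hq1 : q.eval 1 ≠ 0 := hq 1 (by simp)
  have hq0 : q ≠ 0 := fun h => hq1 (by simp [h])
  have hp0 : p ≠ 0 := fun h => hq1 (by simpa [h] using (hcircle 1 (by simp)).symm)
  have hpn : p.natDegree ≤ n := hn ▸ le_max_left _ _
  obtain ⟨c, hc⟩ := exists_conjReflect_eq_C_mul hp0 hq0 hcop hn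
    (mul_conjReflect_eq_of_norm_eval_eq hpn (hn ▸ le_max_right _ _) hcircle)
  have hc1 : ‖c‖ = 1 := by
    have hnorm := congrArg (fun f => ‖f.eval 1‖) hc
    simp only [eval_conjReflect_of_norm_eq_one hpn norm_one, eval_mul, eval_C, norm_mul,
      one_pow, one_mul, Complex.norm_conj, hcircle 1 norm_one] at hnorm
    exact (mul_eq_right₀ (norm_ne_zero_iff.mpr hq1)).mp hnorm.symm
  have hc0 : c ≠ 0 := norm_ne_zero_iff.mp (by simp [hc1])
  have hreflect : ∀ z : ℂ, ‖z‖ ≤ 1 → (conjReflect n p).eval z ≠ 0 := fun z hz => by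
    rw [hc, eval_mul, eval_C]
    exact mul_ne_zero hc0 (hq z hz)
  have hdeg : p.natDegree = n :=
    natDegree_eq_of_eval_zero_conjReflect_ne_zero hpn (hreflect 0 (by simp))
  obtain ⟨a, ha⟩ := p.roots.exists_univ_val_map_eq (IsAlgClosed.card_roots_eq_natDegree.trans hdeg)
  refine ⟨hn1, c * (p.leadingCoeff / conj p.leadingCoeff), a, ?_, fun i => ?_, fun z _ => ?_⟩
  · have hlc : ‖p.leadingCoeff‖ ≠ 0 := by simpa using hp0
    simp [hc1, div_self hlc]
  · exact norm_lt_one_of_mem_roots hreflect (ha ▸ Multiset.mem_map_of_mem a (Finset.mem_univ i))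
  · show p.eval z / q.eval z = _
    have hqz : q.eval z = (conjReflect n p).eval z / c := by
      rw [hc, eval_mul, eval_C, mul_div_cancel_left₀ _ hc0]
    rw [hqz, div_div_eq_mul_div, mul_comm, mul_div_assoc, eval_div_eval_conjReflect hdeg ha,
      mul_assoc]

lemma coe_mem_circleHat {z : ℂ} : (z : OnePoint ℂ) ∈ circleHat ↔ ‖z‖ = 1 := by
  simp [circleHat, OnePoint.coe_injective.mem_set_image]

lemma infty_notMem_circleHat : (∞ : OnePoint ℂ) ∉ circleHat :=
  OnePoint.infty_notMem_image_coe

lemma compl_circleHat_subset :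
    circleHatᶜ ⊆ ((↑) '' ball (0 : ℂ) 1 ∪ ((↑) '' closedBall (0 : ℂ) 1)ᶜ : Set (OnePoint ℂ)) := by
  intro w hw
  induction w using OnePoint.rec with
  | infty => exact Or.inr OnePoint.infty_notMem_image_coe
  | coe z =>
    rw [mem_compl_iff, coe_mem_circleHat] at hw
    simp only [mem_union, mem_compl_iff, OnePoint.coe_injective.mem_set_image, mem_ball_zero_iff,
      mem_closedBall_zero_iff, not_le]
    exact lt_or_gt_of_ne hw

structure IsReducedQuotient (r : OnePoint ℂ → OnePoint ℂ) (p q : ℂ[X]) : Prop where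
  isCoprime : IsCoprime p q
  apply_of_eval_ne_zero : ∀ z : ℂ, q.eval z ≠ 0 → r z = ((p.eval z / q.eval z : ℂ) : OnePoint ℂ)
  apply_of_eval_eq_zero : ∀ z : ℂ, q.eval z = 0 → r z = ∞

lemma tendsto_eval_div_eval_cobounded {p q : ℂ[X]} {z : ℂ} (hp : p.eval z ≠ 0)
    (hq : q.eval z = 0) :
    Tendsto (fun w => p.eval w / q.eval w) (𝓝[{w | q.eval w ≠ 0}] z) (cobounded ℂ) := by
  have hlim : Tendsto (fun w => q.eval w / p.eval w) (𝓝[{w | q.eval w ≠ 0}] z) (𝓝[≠] 0) := by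
    refine tendsto_nhdsWithin_iff.mpr ⟨?_, ?_⟩
    · simpa [hq, Pi.div_def] using
        ((q.continuous.tendsto z).div (p.continuous.tendsto z) hp).mono_left nhdsWithin_le_nhds
    · filter_upwards [self_mem_nhdsWithin,
        nhdsWithin_le_nhds (p.continuous.continuousAt.eventually_ne hp)] with w hqw hpw
      exact div_ne_zero hqw hpw
  simpa [Function.comp_def] using tendsto_inv₀_nhdsNE_zero.comp hlim

lemma IsRationalMap.exists_isReducedQuotient {r : OnePoint ℂ → OnePoint ℂ} (hr : IsRationalMap r) :
    ∃ p q : ℂ[X], IsReducedQuotient r p q := by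
  obtain ⟨hcont, p₀, q₀, hq₀, hr⟩ := hr
  set g := gcd p₀ q₀
  have hg : g ≠ 0 := gcd_ne_zero_of_right hq₀
  set p := p₀ / g
  set q := q₀ / g
  have hpg : p₀ = g * p := (EuclideanDomain.mul_div_cancel' hg (gcd_dvd_left p₀ q₀)).symm
  have hqg : q₀ = g * q := (EuclideanDomain.mul_div_cancel' hg (gcd_dvd_right p₀ q₀)).symm
  set S := {w : ℂ | q₀.eval w ≠ 0}
  have hS : ∀ z, (𝓝[S] z).NeBot := fun z =>
    mem_closure_iff_nhdsWithin_neBot.mp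
      (((finite_setOfPred_isRoot hq₀).countable.dense_compl ℂ).closure_eq ▸ mem_univ z)
  have hgqS : ∀ w ∈ S, g.eval w * q.eval w ≠ 0 := fun w hw => by rwa [← eval_mul, ← hqg]
  have hqS : S ⊆ {w | q.eval w ≠ 0} := fun w hw => right_ne_zero_of_mul (hgqS w hw)
  have hrS : EqOn (fun w : ℂ => r w) (fun w => ((p.eval w / q.eval w : ℂ) : OnePoint ℂ)) S :=
    fun w hw => by
      dsimp only
      rw [hr w hw, hpg, hqg, eval_mul, eval_mul,
        mul_div_mul_left _ _ (left_ne_zero_of_mul (hgqS w hw))]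
  have hlim (z : ℂ) {v : OnePoint ℂ}
      (hv : Tendsto (fun w => ((p.eval w / q.eval w : ℂ) : OnePoint ℂ)) (𝓝[S] z) (𝓝 v)) :
      r z = v :=
    tendsto_nhds_unique (((hcont.comp OnePoint.continuous_coe).tendsto z).mono_left
      nhdsWithin_le_nhds |>.congr' (eventuallyEq_nhdsWithin_of_eqOn hrS)) hv
  have hcop : IsCoprime p q := isCoprime_div_gcd_div_gcd hq₀
  refine ⟨p, q, hcop, fun z hz => hlim z ?_, fun z hz => hlim z ?_⟩
  · exact (OnePoint.continuous_coe.tendsto _).comp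
      (((p.continuous.tendsto z).div (q.continuous.tendsto z) hz).mono_left nhdsWithin_le_nhds)
  · have hpz : p.eval z ≠ 0 := by
      simpa [hz] using aeval_ne_zero_of_isCoprime hcop z
    refine OnePoint.tendsto_coe_infty.comp ?_
    rw [coclosedCompact_eq_cocompact, ← cobounded_eq_cocompact]
    exact (tendsto_eval_div_eval_cobounded hpz hz).mono_left (nhdsWithin_mono _ hqS)

lemma mapsTo_ball_or_compl_closedBall {r : OnePoint ℂ → OnePoint ℂ} (hr : Continuous r)
    (hpre : r ⁻¹' circleHat = circleHat) :
    MapsTo (r ∘ (↑)) (ball (0 : ℂ) 1) ((↑) '' ball (0 : ℂ) 1) ∨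
      MapsTo (r ∘ (↑)) (ball (0 : ℂ) 1) ((↑) '' closedBall (0 : ℂ) 1)ᶜ := by
  have hcover : (r ∘ (↑)) '' ball (0 : ℂ) 1 ⊆
      ((↑) '' ball (0 : ℂ) 1 ∪ ((↑) '' closedBall (0 : ℂ) 1)ᶜ) := by
    rintro _ ⟨z, hz, rfl⟩
    refine compl_circleHat_subset fun hrz => ?_
    rw [Function.comp_apply, ← mem_preimage, hpre, coe_mem_circleHat] at hrz
    exact (mem_ball_zero_iff.mp hz).ne hrz
  simp only [mapsTo_iff_image_subset]
  exact ((convex_ball (0 : ℂ) 1).isPreconnected.image _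
    (hr.comp OnePoint.continuous_coe).continuousOn).subset_or_subset
    (OnePoint.isOpenMap_coe _ isOpen_ball)
    (OnePoint.isOpen_compl_image_coe.mpr ⟨isClosed_closedBall, isCompact_closedBall 0 1⟩)
    (disjoint_compl_right.mono_left (image_mono ball_subset_closedBall)) hcover

namespace IsReducedQuotient

variable {r : OnePoint ℂ → OnePoint ℂ} {p q : ℂ[X]}

lemma eval_ne_zero_of_norm_eq_one (h : IsReducedQuotient r p q)
    (hpre : r ⁻¹' circleHat = circleHat) {z : ℂ} (hz : ‖z‖ = 1) : q.eval z ≠ 0 := fun hq => by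
  have hrz : (z : OnePoint ℂ) ∈ r ⁻¹' circleHat := by rwa [hpre, coe_mem_circleHat]
  exact infty_notMem_circleHat (h.apply_of_eval_eq_zero z hq ▸ hrz)

lemma norm_eval_eq_iff (h : IsReducedQuotient r p q) (hpre : r ⁻¹' circleHat = circleHat)
    {z : ℂ} (hq : q.eval z ≠ 0) : ‖p.eval z‖ = ‖q.eval z‖ ↔ ‖z‖ = 1 := by
  rw [← coe_mem_circleHat (z := z), ← hpre, mem_preimage, h.apply_of_eval_ne_zero z hq,
    coe_mem_circleHat, norm_div, div_eq_one_iff_eq (norm_ne_zero_iff.mpr hq)]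

lemma one_le_max_natDegree (h : IsReducedQuotient r p q) (hpre : r ⁻¹' circleHat = circleHat) :
    1 ≤ max p.natDegree q.natDegree := by
  by_contra! hdeg
  obtain ⟨a, rfl⟩ := natDegree_eq_zero.mp (by omega : p.natDegree = 0)
  obtain ⟨b, rfl⟩ := natDegree_eq_zero.mp (by omega : q.natDegree = 0)
  have hb : b ≠ 0 := by simpa using h.eval_ne_zero_of_norm_eq_one hpre norm_one
  have hab : ‖a‖ = ‖b‖ := by simpa using (h.norm_eval_eq_iff hpre (z := 1) (by simpa)).mpr norm_one
  simpa using (h.norm_eval_eq_iff hpre (z := 0) (by simpa)).mp (by simpa)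

lemma forall_eval_ne_zero_of_norm_le_one_or (h : IsReducedQuotient r p q) (hr : Continuous r)
    (hpre : r ⁻¹' circleHat = circleHat) :
    (∀ z : ℂ, ‖z‖ ≤ 1 → q.eval z ≠ 0) ∨ (∀ z : ℂ, ‖z‖ ≤ 1 → p.eval z ≠ 0) := by
  have hq_circle (z : ℂ) (hz : ‖z‖ = 1) : q.eval z ≠ 0 := h.eval_ne_zero_of_norm_eq_one hpre hz
  have hp_circle (z : ℂ) (hz : ‖z‖ = 1) : p.eval z ≠ 0 := by
    rw [← norm_ne_zero_iff, (h.norm_eval_eq_iff hpre (hq_circle z hz)).mpr hz, norm_ne_zero_iff]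
    exact hq_circle z hz
  refine (mapsTo_ball_or_compl_closedBall hr hpre).imp (fun hin z hz hq => ?_)
    (fun hout z hz hp => ?_)
  · rcases hz.lt_or_eq with hz | hz
    · have hrz := hin (mem_ball_zero_iff.mpr hz)
      rw [Function.comp_apply, h.apply_of_eval_eq_zero z hq] at hrz
      exact OnePoint.infty_notMem_image_coe hrz
    · exact hq_circle z hz hq
  · rcases hz.lt_or_eq with hz | hz
    · have hqz : q.eval z ≠ 0 := by simpa [hp] using aeval_ne_zero_of_isCoprime h.isCoprime z
      refine hout (mem_ball_zero_iff.mpr hz) ⟨0, by simp, ?_⟩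
      simp [h.apply_of_eval_ne_zero z hqz, hp]
    · exact hp_circle z hz hp

end IsReducedQuotient

theorem qfbp_circle_preimage_eq_circle_blaschke_or_inv_general
    (C : OnePoint ℂ → OnePoint ℂ) (hC : IsRationalMap C)
    (hpre : C ⁻¹' circleHat = circleHat) :
    (∃ d, IsBlaschkeHat d C) ∨ (∃ d, IsInvBlaschkeHat d C) := by
  obtain ⟨p, q, h⟩ := hC.exists_isReducedQuotient
  have hcircle (z : ℂ) (hz : ‖z‖ = 1) : ‖p.eval z‖ = ‖q.eval z‖ :=
    (h.norm_eval_eq_iff hpre (h.eval_ne_zero_of_norm_eq_one hpre hz)).mpr hz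
  have hn := h.one_le_max_natDegree hpre
  rcases h.forall_eval_ne_zero_of_norm_le_one_or hC.1 hpre with hq | hp
  · exact .inl ⟨_, _, isBlaschke_eval_div_eval h.isCoprime rfl hn hcircle hq,
      fun z hz => h.apply_of_eval_ne_zero z (hq z hz)⟩
  · refine .inr ⟨_, _, isBlaschke_eval_div_eval h.isCoprime.symm (max_comm _ _) hn
      (fun z hz => (hcircle z hz).symm) hp, fun z hz => ⟨fun hB => ?_, fun hB => ?_⟩⟩
    · exact h.apply_of_eval_eq_zero z (by simpa [hp z hz] using hB)
    · rw [h.apply_of_eval_ne_zero z (div_ne_zero_iff.mp hB).1, inv_div]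

/-- a nonconstant rational map `C` with `C(𝕋) ⊆ 𝕋` whose full preimage
of the circle is the circle, `C⁻¹(𝕋) = 𝕋`, is a finite Blaschke product or the
reciprocal of a finite Blaschke product. -/
theorem qfbp_circle_preimage_eq_circle_blaschke_or_inv
    (C : OnePoint ℂ → OnePoint ℂ) (hC : IsRationalMap C)
    (hnc : ¬ ∃ c : OnePoint ℂ, ∀ w, C w = c)
    (hT : C '' circleHat ⊆ circleHat)
    (hpre : C ⁻¹' circleHat = circleHat) :
    (∃ d, IsBlaschkeHat d C) ∨ (∃ d, IsInvBlaschkeHat d C) :=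
  qfbp_circle_preimage_eq_circle_blaschke_or_inv_general C hC hpre
end

section
/- With ρ_A, ρ_B : G → S_d and the relation ∼ as defined: for every h ∈ G and all j, k ∈ {1, …, d}, if j ∼ k then ρ_A(h)(j) ∼ ρ_A(h)(k) and ρ_B(h)(j) ∼ ρ_B(h)(k). Equivalently, both permutation representations ρ_A and ρ_B respect the partition 𝒫 of {1, …, d} into ∼-equivalence classes: the image of each class under ρ_A(h) or ρ_B(h) is contained in a single class. -/
/-! Monodromy relations `≃` and `∼` for two permutation representations
`ρA, ρB : G → S_d` (modelling the monodromy actions of two degree-`d`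
Blaschke products). -/

/-- The symmetric relation `≃` on `{1, …, d}` (modelled as `Fin d`): `j ≃ k` iff some
`g ∈ G` and index `i` satisfy `ρB g i = j` and `ρA g i = k`, or vice versa. -/
def monSimeq {G : Type*} [Group G] {d : ℕ} (ρA ρB : G →* Equiv.Perm (Fin d))
    (j k : Fin d) : Prop :=
  ∃ (g : G) (i : Fin d), (ρB g i = j ∧ ρA g i = k) ∨ (ρB g i = k ∧ ρA g i = j)

/-- The equivalence relation `∼` generated by `≃`. -/
def monSim {G : Type*} [Group G] {d : ℕ} (ρA ρB : G →* Equiv.Perm (Fin d))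
    (j k : Fin d) : Prop :=
  Relation.EqvGen (monSimeq ρA ρB) j k

/-! The generators of `∼` are the pairs `ρB g i ≃ ρA g i`, so `ρA h x ∼ ρB h x` for every `x`
(take `g = h`), and translating a generator by `h` gives the generator
`ρB h (ρB g i) ≃ ρA h (ρA g i)` (take `h * g`). Together these put `ρB h` of both sides of a
generator into one class, hence also of every `∼`-related pair; for `ρA h` pass through `ρB h`. -/

theorem Relation.EqvGen.map_of_rel {α β : Type*} {r : α → α → Prop} {s : β → β → Prop}
    (f : α → β) (hf : ∀ a b, r a b → EqvGen s (f a) (f b)) {a b : α} (hab : EqvGen r a b) :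
    EqvGen s (f a) (f b) := by
  induction hab with
  | rel a b hr => exact hf a b hr
  | refl a => exact .refl _
  | symm a b _ ih => exact ih.symm
  | trans a b c _ _ ihab ihbc => exact ihab.trans _ _ _ ihbc

section

variable {G : Type*} [Group G] {d : ℕ} (ρA ρB : G →* Equiv.Perm (Fin d))

theorem monSim_of_apply_eq (g : G) (i : Fin d) {j k : Fin d} (hj : ρB g i = j)
    (hk : ρA g i = k) : monSim ρA ρB j k :=
  .rel _ _ ⟨g, i, .inl ⟨hj, hk⟩⟩

theorem monSim_apply_left_right (h : G) (x : Fin d) : monSim ρA ρB (ρA h x) (ρB h x) :=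
  .symm _ _ (monSim_of_apply_eq ρA ρB h x rfl rfl)

theorem monSim_apply_right_of_apply_eq (h : G) {g : G} {i j k : Fin d}
    (hj : ρB g i = j) (hk : ρA g i = k) : monSim ρA ρB (ρB h j) (ρB h k) := by
  have hgen : monSim ρA ρB (ρB h j) (ρA h k) :=
    monSim_of_apply_eq ρA ρB (h * g) i (by simp [← hj]) (by simp [← hk])
  exact .trans _ _ _ hgen (monSim_apply_left_right ρA ρB h k)

theorem monSim.apply_right (h : G) {j k : Fin d} (hjk : monSim ρA ρB j k) :
    monSim ρA ρB (ρB h j) (ρB h k) := by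
  refine Relation.EqvGen.map_of_rel (ρB h) (fun x y hxy => ?_) hjk
  obtain ⟨g, i, ⟨hx, hy⟩ | ⟨hy, hx⟩⟩ := hxy
  · exact monSim_apply_right_of_apply_eq ρA ρB h hx hy
  · exact .symm _ _ (monSim_apply_right_of_apply_eq ρA ρB h hy hx)

end

/-- for every `h ∈ G` and all `j, k`, if `j ∼ k` then
`ρA h j ∼ ρA h k` and `ρB h j ∼ ρB h k`; i.e. both representations respect the
partition of `{1, …, d}` into `∼`-classes. -/
theorem monSim_respected {G : Type*} [Group G] {d : ℕ}
    (ρA ρB : G →* Equiv.Perm (Fin d)) (h : G) (j k : Fin d)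
    (hjk : monSim ρA ρB j k) :
    monSim ρA ρB (ρA h j) (ρA h k) ∧ monSim ρA ρB (ρB h j) (ρB h k) := by
  have hB := hjk.apply_right ρA ρB h
  refine ⟨?_, hB⟩
  exact .trans _ _ _ (monSim_apply_left_right ρA ρB h j)
    (.trans _ _ _ hB (.symm _ _ (monSim_apply_left_right ρA ρB h k)))
end
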